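/- arXiv:1804.00686 — 11 statements merged into one kernel-verified Lean document; each statement's English description precedes it below -/
import Mathlib

section
/- Let I be a square-free monomial ideal in R = k[x_1,…,x_n]. Then I is an f-ideal if and only if |A_d(I)| = |C_d(I)| for all 0 ≤ d ≤ n. -/
/-!
Encoding: a squarefree monomial of `k[x₁,…,xₙ]` is encoded by its support, a
`Finset (Fin n)` (the monomial `∏ i ∈ T, xᵢ` corresponds to `T`); its degree is
`T.card`, and divisibility of squarefree monomials is inclusion of supports.
A squarefree monomial ideal `I` is encoded by the antichain
`G : Finset (Finset (Fin n))` of supports of its unique minimal set of monomial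
generators `G(I)`; the squarefree monomial with support `T` lies in `I` iff
`S ⊆ T` for some `S ∈ G`.
-/

open Finset

/-- The squarefree monomial with support `T` belongs to the squarefree monomial
ideal with minimal generating supports `G`. -/
def memIdeal {n : ℕ} (G : Finset (Finset (Fin n))) (T : Finset (Fin n)) : Prop :=
  ∃ S ∈ G, S ⊆ T

/-- The Newton complementary dual `Î = ⟨(x₁⋯xₙ)/m : m ∈ G(I)⟩`: each minimal
generator support `S` is replaced by its complement `Sᶜ`, the support of
`(x₁⋯xₙ)/(∏ i ∈ S, xᵢ)`. -/
def ncDual {n : ℕ} (G : Finset (Finset (Fin n))) : Finset (Finset (Fin n)) :=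
  G.image fun S => Sᶜ

/-- `faceN G d` is the number of faces of cardinality `d` (i.e. of dimension
`d - 1`) of the non-face (Stanley–Reisner) complex `δ_N(I)`, whose faces are the
supports of squarefree monomials not in `I`.  Thus `faceN G (j + 1)` is the
f-vector entry `f_j(δ_N(I))`, and trailing entries are `0`. -/
noncomputable def faceN {n : ℕ} (G : Finset (Finset (Fin n))) (d : ℕ) : ℕ :=
  Nat.card {T : Finset (Fin n) | T.card = d ∧ ¬ memIdeal G T}

/-- `faceF G d` is the number of faces of cardinality `d` (i.e. of dimension
`d - 1`) of the facet complex `δ_F(I)`, whose faces are the subsets of the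
supports of the minimal generators.  Thus `faceF G (j + 1)` is the f-vector
entry `f_j(δ_F(I))`, and trailing entries are `0`. -/
noncomputable def faceF {n : ℕ} (G : Finset (Finset (Fin n))) (d : ℕ) : ℕ :=
  Nat.card {T : Finset (Fin n) | T.card = d ∧ ∃ S ∈ G, T ⊆ S}

/-- `I` is an f-ideal iff `δ_N(I)` and `δ_F(I)` have the same f-vector. -/
def IsFIdeal {n : ℕ} (G : Finset (Finset (Fin n))) : Prop :=
  ∀ d : ℕ, faceN G d = faceF G d

/-- A squarefree monomial ideal `I` is an f-ideal iff `|A_d(I)| = |C_d(I)|` for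
all `0 ≤ d ≤ n`, where `A_d(I)` is the set of squarefree monomials of degree `d`
that are not in `I` and divide no minimal generator of `I`, and `C_d(I)` is the
set of squarefree monomials of degree `d` that are minimal generators of `I`. -/
theorem isFIdeal_iff_card_A_eq_card_C {n : ℕ} (G : Finset (Finset (Fin n)))
    (hG : IsAntichain (· ⊆ ·) (G : Set (Finset (Fin n)))) :
    IsFIdeal G ↔
      ∀ d : ℕ, d ≤ n →
        Nat.card {T : Finset (Fin n) |
            T.card = d ∧ ¬ memIdeal G T ∧ ¬ ∃ S ∈ G, T ⊆ S} =
          Nat.card {T : Finset (Fin n) | T.card = d ∧ T ∈ G} := by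
  classical
  have natCard_setOf : ∀ (p : Finset (Fin n) → Prop) [DecidablePred p],
      Nat.card {T : Finset (Fin n) | p T} = (univ.filter p).card := by
    intro p _
    have h : {T : Finset (Fin n) | p T} = ↑(univ.filter p) := by ext T; simp
    rw [h, Nat.card_coe_set_eq, Set.ncard_coe_finset]
  have hcard : ∀ (p q : Finset (Fin n) → Prop) [DecidablePred p] [DecidablePred q],
      (∀ T, p T ↔ q T) → (univ.filter p).card = (univ.filter q).card := by
    intro p q _ _ h
    congr 1
    ext T
    simp [h T]
  -- key: if T divides a minimal generator and lies in the ideal, then T ∈ G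
  have key : ∀ T : Finset (Fin n), (∃ S ∈ G, T ⊆ S) → memIdeal G T → T ∈ G := by
    rintro T ⟨S, hS, hTS⟩ ⟨S', hS', hS'T⟩
    have hSS : S' ⊆ S := hS'T.trans hTS
    have : S' = S := by
      by_contra hne
      exact hG hS' hS hne hSS
    subst this
    have : T = S' := subset_antisymm hTS hS'T
    rwa [this]
  set a : ℕ → ℕ := fun d =>
    (univ.filter fun T : Finset (Fin n) =>
      T.card = d ∧ ¬ memIdeal G T ∧ ¬ ∃ S ∈ G, T ⊆ S).card with ha
  set b : ℕ → ℕ := fun d =>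
    (univ.filter fun T : Finset (Fin n) =>
      T.card = d ∧ ¬ memIdeal G T ∧ ∃ S ∈ G, T ⊆ S).card with hb
  set c : ℕ → ℕ := fun d =>
    (univ.filter fun T : Finset (Fin n) => T.card = d ∧ T ∈ G).card with hc
  have hN : ∀ d, faceN G d = a d + b d := by
    intro d
    rw [faceN, natCard_setOf]
    rw [← Finset.card_filter_add_card_filter_not
      (p := fun T : Finset (Fin n) => ¬ ∃ S ∈ G, T ⊆ S), Finset.filter_filter,
      Finset.filter_filter]
    congr 1
    · simp only [ha]; apply hcard; intro T; tauto
    · simp only [hb]; apply hcard; intro T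
      constructor
      · rintro ⟨⟨h1, h2⟩, h3⟩; exact ⟨h1, h2, not_not.mp h3⟩
      · rintro ⟨h1, h2, h3⟩; exact ⟨⟨h1, h2⟩, not_not.mpr h3⟩
  have hF : ∀ d, faceF G d = c d + b d := by
    intro d
    rw [faceF, natCard_setOf]
    rw [← Finset.card_filter_add_card_filter_not
      (p := fun T : Finset (Fin n) => memIdeal G T), Finset.filter_filter,
      Finset.filter_filter]
    congr 1
    · simp only [hc]; apply hcard; intro T
      constructor
      · rintro ⟨⟨h1, h2⟩, h3⟩; exact ⟨h1, key T h2 h3⟩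
      · rintro ⟨h1, h2⟩; exact ⟨⟨h1, ⟨T, h2, subset_rfl⟩⟩, ⟨T, h2, subset_rfl⟩⟩
    · simp only [hb]; apply hcard; intro T; tauto
  have hd : ∀ d, (faceN G d = faceF G d ↔ a d = c d) := by
    intro d; rw [hN, hF]; omega
  have hA : ∀ d, Nat.card {T : Finset (Fin n) |
      T.card = d ∧ ¬ memIdeal G T ∧ ¬ ∃ S ∈ G, T ⊆ S} = a d := by
    intro d; simp only [ha]; exact natCard_setOf _
  have hC : ∀ d, Nat.card {T : Finset (Fin n) | T.card = d ∧ T ∈ G} = c d := by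
    intro d; simp only [hc]; exact natCard_setOf _
  constructor
  · intro h d _
    rw [hA, hC]
    exact (hd d).mp (h d)
  · intro h d
    rcases le_or_gt d n with hdn | hdn
    · have := h d hdn
      rw [hA, hC] at this
      exact (hd d).mpr this
    · have hempty : ∀ T : Finset (Fin n), T.card ≠ d := by
        intro T hT
        have := Finset.card_le_univ T
        simp [hT, Fintype.card_fin] at this
        omega
      rw [hN, hF]
      have ha0 : a d = 0 := by
        simp only [ha, Finset.card_eq_zero, Finset.filter_eq_empty_iff]
        intro T _; exact fun h => hempty T h.1
      have hb0 : b d = 0 := by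
        simp only [hb, Finset.card_eq_zero, Finset.filter_eq_empty_iff]
        intro T _; exact fun h => hempty T h.1
      have hc0 : c d = 0 := by
        simp only [hc, Finset.card_eq_zero, Finset.filter_eq_empty_iff]
        intro T _; exact fun h => hempty T h.1
      rw [ha0, hb0, hc0]
end

section
/- Let I be a square-free monomial ideal in R = k[x_1,…,x_n] and let (f_{-1},f_0,…,f_d) be the f-vector of the facet complex δ_F(I), with the convention f_i = 0 for i > d. Then the f-vector of the non-face complex δ_N(Î) of the Newton complementary dual Î satisfies f_l(δ_N(Î)) = C(n, l+1) − f_{n−l−2}(δ_F(I)) for all l = −1, 0, …, n−1, i.e., f(δ_N(Î)) = (C(n,0) − f_{n−1}, …, C(n,i) − f_{n−i−1}, …, C(n,n−1) − f_0, C(n,n) − f_{−1}). -/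
/-!
Encoding: a squarefree monomial of `k[x₁,…,xₙ]` is encoded by its support, a
`Finset (Fin n)` (the monomial `∏ i ∈ T, xᵢ` corresponds to `T`); its degree is
`T.card`, and divisibility of squarefree monomials is inclusion of supports.
A squarefree monomial ideal `I` is encoded by the antichain
`G : Finset (Finset (Fin n))` of supports of its unique minimal set of monomial
generators `G(I)`; the squarefree monomial with support `T` lies in `I` iff
`S ⊆ T` for some `S ∈ G`.
-/

open Finset

open Classical in
lemma faceN_eq_filter {n : ℕ} (G : Finset (Finset (Fin n))) (d : ℕ) :
    faceN G d = (univ.filter (fun T : Finset (Fin n) => T.card = d ∧ ¬ memIdeal G T)).card := by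
  have h : {T : Finset (Fin n) | T.card = d ∧ ¬ memIdeal G T}
      = ↑(univ.filter (fun T : Finset (Fin n) => T.card = d ∧ ¬ memIdeal G T)) := by
    ext T; simp
  rw [faceN, h, Nat.card_coe_set_eq, Set.ncard_coe_finset]

open Classical in
lemma faceF_eq_filter {n : ℕ} (G : Finset (Finset (Fin n))) (d : ℕ) :
    faceF G d = (univ.filter (fun T : Finset (Fin n) => T.card = d ∧ ∃ S ∈ G, T ⊆ S)).card := by
  have h : {T : Finset (Fin n) | T.card = d ∧ ∃ S ∈ G, T ⊆ S}
      = ↑(univ.filter (fun T : Finset (Fin n) => T.card = d ∧ ∃ S ∈ G, T ⊆ S)) := by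
    ext T; simp
  rw [faceF, h, Nat.card_coe_set_eq, Set.ncard_coe_finset]

lemma compl_subset_comm' {n : ℕ} {S T : Finset (Fin n)} : Sᶜ ⊆ T ↔ Tᶜ ⊆ S := by
  constructor <;> intro h x hx <;> by_contra hc <;>
    exact absurd (h (Finset.mem_compl.mpr hc)) (Finset.mem_compl.mp hx)

lemma key_count {n : ℕ} (G : Finset (Finset (Fin n))) (d e : ℕ) (hde : d + e = n) :
    faceN (ncDual G) d + faceF G e = n.choose d := by
  classical
  rw [faceN_eq_filter, faceF_eq_filter]
  -- rewrite membership in ncDual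
  have hmem : ∀ T : Finset (Fin n), memIdeal (ncDual G) T ↔ ∃ S ∈ G, Tᶜ ⊆ S := by
    intro T
    constructor
    · rintro ⟨S', hS', hsub⟩
      rw [ncDual, mem_image] at hS'
      obtain ⟨S, hS, rfl⟩ := hS'
      exact ⟨S, hS, compl_subset_comm'.mp hsub⟩
    · rintro ⟨S, hS, hsub⟩
      exact ⟨Sᶜ, mem_image_of_mem _ hS, compl_subset_comm'.mpr hsub⟩
  -- faceF G e counted via complements
  have hF : (univ.filter (fun T : Finset (Fin n) => T.card = e ∧ ∃ S ∈ G, T ⊆ S)).card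
      = (univ.filter (fun T : Finset (Fin n) => T.card = d ∧ ∃ S ∈ G, Tᶜ ⊆ S)).card := by
    apply Finset.card_nbij' (i := fun T => Tᶜ) (j := fun T => Tᶜ)
    · intro T hT
      simp only [mem_coe, mem_filter, mem_univ, true_and] at hT ⊢
      refine ⟨?_, ?_⟩
      · rw [Finset.card_compl, hT.1, Fintype.card_fin]; omega
      · simpa using hT.2
    · intro T hT
      simp only [mem_coe, mem_filter, mem_univ, true_and] at hT ⊢
      refine ⟨?_, hT.2⟩
      rw [Finset.card_compl, hT.1, Fintype.card_fin]; omega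
    · intro T _; simp
    · intro T _; simp
  rw [hF]
  have h1 : (univ.filter (fun T : Finset (Fin n) => T.card = d ∧ ¬ memIdeal (ncDual G) T))
      = (univ.filter (fun T : Finset (Fin n) => T.card = d)).filter
          (fun T => ¬ ∃ S ∈ G, Tᶜ ⊆ S) := by
    rw [filter_filter]
    apply filter_congr
    intro T _
    simp [hmem T]
  have h2 : (univ.filter (fun T : Finset (Fin n) => T.card = d ∧ ∃ S ∈ G, Tᶜ ⊆ S))
      = (univ.filter (fun T : Finset (Fin n) => T.card = d)).filter
          (fun T => ∃ S ∈ G, Tᶜ ⊆ S) := by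
    rw [filter_filter]
  rw [h1, h2, Nat.add_comm, Finset.card_filter_add_card_filter_not]
  have : (univ.filter (fun T : Finset (Fin n) => T.card = d))
      = (univ : Finset (Fin n)).powersetCard d := by
    rw [Finset.powersetCard_eq_filter, Finset.powerset_univ]
  rw [this, Finset.card_powersetCard, Finset.card_univ, Fintype.card_fin]

/-- If `(f₋₁, f₀, …, f_d)` is the f-vector of the facet complex `δ_F(I)` (with
`f_i = 0` for `i > d`), then for all `-1 ≤ l ≤ n - 1` the f-vector of the
non-face complex of the Newton complementary dual satisfies
`f_l(δ_N(Î)) = C(n, l+1) - f_{n-l-2}(δ_F(I))`.  (Recall that the f-vector entry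
at dimension `j` is the face count at cardinality `j + 1`.) -/
theorem fvector_nonface_ncDual {n : ℕ} (G : Finset (Finset (Fin n)))
    (hG : IsAntichain (· ⊆ ·) (G : Set (Finset (Fin n)))) :
    ∀ l : ℤ, -1 ≤ l → l ≤ (n : ℤ) - 1 →
      (faceN (ncDual G) (l + 1).toNat : ℤ)
        = (n.choose (l + 1).toNat : ℤ) - (faceF G ((n : ℤ) - l - 1).toNat : ℤ) := by
  intro l hl hl'
  have hde : (l + 1).toNat + ((n : ℤ) - l - 1).toNat = n := by omega
  have := key_count G (l + 1).toNat ((n : ℤ) - l - 1).toNat hde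
  omega
end

section
/- For all integers n ≥ 1 and 1 ≤ d ≤ n−1, the sets V(n,d) and V(n,n−d) have the same cardinality; in fact, the Newton complementary dual I ↦ Î gives a bijection between V(n,d) and V(n,n−d). -/
/-!
Encoding: a squarefree monomial of `k[x₁,…,xₙ]` is encoded by its support, a
`Finset (Fin n)` (the monomial `∏ i ∈ T, xᵢ` corresponds to `T`); its degree is
`T.card`, and divisibility of squarefree monomials is inclusion of supports.
A squarefree monomial ideal `I` is encoded by the antichain
`G : Finset (Finset (Fin n))` of supports of its unique minimal set of monomial
generators `G(I)`; the squarefree monomial with support `T` lies in `I` iff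
`S ⊆ T` for some `S ∈ G`.
-/

open Finset

/-- `V(n,d)`: the set of f-ideals of `k[x₁,…,xₙ]` that are equigenerated in
degree `d` (each ideal being encoded by the antichain of supports of its
minimal monomial generators). -/
def Vset (n d : ℕ) : Set (Finset (Finset (Fin n))) :=
  {G | IsAntichain (· ⊆ ·) (G : Set (Finset (Fin n))) ∧
    (∀ S ∈ G, S.card = d) ∧ IsFIdeal G}


section Aux
variable {n : ℕ}

lemma complSubsetComm {S T : Finset (Fin n)} : Sᶜ ⊆ T ↔ Tᶜ ⊆ S := by
  rw [← Finset.le_iff_subset, ← Finset.le_iff_subset]; exact compl_le_iff_compl_le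

lemma subsetComplComm {S T : Finset (Fin n)} : S ⊆ Tᶜ ↔ T ⊆ Sᶜ := by
  rw [← Finset.le_iff_subset, ← Finset.le_iff_subset]; exact le_compl_iff_le_compl

lemma ncDual_ncDual (G : Finset (Finset (Fin n))) : ncDual (ncDual G) = G := by
  simp [ncDual, Finset.image_image, Function.comp]

lemma cardSplit (m : ℕ) (P : Finset (Fin n) → Prop) :
    Nat.card {T : Finset (Fin n) | T.card = m ∧ ¬ P T}
      + Nat.card {T : Finset (Fin n) | T.card = m ∧ P T}
      = Nat.card {T : Finset (Fin n) | T.card = m} := by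
  rw [Nat.card_coe_set_eq, Nat.card_coe_set_eq, Nat.card_coe_set_eq,
    ← Set.ncard_union_eq ?_ (Set.toFinite _) (Set.toFinite _)]
  · congr 1
    ext T
    by_cases h : P T <;> simp [h]
  · rw [Set.disjoint_left]
    rintro T ⟨-, h⟩ ⟨-, h'⟩
    exact h h'

lemma cardCompl {m : ℕ} (he : m ≤ n) (P : Finset (Fin n) → Prop) :
    Nat.card {T : Finset (Fin n) | T.card = m ∧ P T}
      = Nat.card {T : Finset (Fin n) | T.card = n - m ∧ P Tᶜ} := by
  apply Nat.card_congr
  refine ⟨fun ⟨T, hT⟩ => ⟨Tᶜ, ?_⟩, fun ⟨T, hT⟩ => ⟨Tᶜ, ?_⟩, fun ⟨T, hT⟩ => ?_, fun ⟨T, hT⟩ => ?_⟩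
  · obtain ⟨h1, h2⟩ := hT
    exact ⟨by simp [Finset.card_compl, h1], by simpa using h2⟩
  · obtain ⟨h1, h2⟩ := hT
    exact ⟨by simp [Finset.card_compl, h1, Nat.sub_sub_self he], h2⟩
  · simp
  · simp

lemma memIdeal_ncDual (G : Finset (Finset (Fin n))) (T : Finset (Fin n)) :
    memIdeal (ncDual G) T ↔ ∃ S ∈ G, Tᶜ ⊆ S := by
  simp only [memIdeal, ncDual, Finset.mem_image]
  constructor
  · rintro ⟨S', ⟨S, hS, rfl⟩, h⟩
    exact ⟨S, hS, complSubsetComm.mp h⟩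
  · rintro ⟨S, hS, h⟩
    exact ⟨Sᶜ, ⟨S, hS, rfl⟩, complSubsetComm.mpr h⟩

lemma faceEmpty {m : ℕ} (hm : n < m) (P : Finset (Fin n) → Prop) :
    Nat.card {T : Finset (Fin n) | T.card = m ∧ P T} = 0 := by
  have : {T : Finset (Fin n) | T.card = m ∧ P T} = ∅ := by
    ext T
    simp only [Set.mem_setOf_eq, Set.mem_empty_iff_false, iff_false]
    rintro ⟨hT, -⟩
    have : T.card ≤ n := by simpa using T.card_le_univ
    omega
  rw [this]
  simp

lemma faceN_ncDual {G : Finset (Finset (Fin n))} {e : ℕ} (he : e ≤ n) :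
    faceN (ncDual G) e
      = Nat.card {T : Finset (Fin n) | T.card = n - e ∧ ¬ ∃ S ∈ G, T ⊆ S} := by
  unfold faceN
  rw [cardCompl he]
  have : ∀ T : Finset (Fin n), (T.card = n - e ∧ ¬ memIdeal (ncDual G) Tᶜ)
      ↔ (T.card = n - e ∧ ¬ ∃ S ∈ G, T ⊆ S) := by
    intro T
    simp [memIdeal_ncDual]
  simp only [this]

lemma faceF_ncDual {G : Finset (Finset (Fin n))} {e : ℕ} (he : e ≤ n) :
    faceF (ncDual G) e
      = Nat.card {T : Finset (Fin n) | T.card = n - e ∧ memIdeal G T} := by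
  unfold faceF
  have : ∀ T : Finset (Fin n), (∃ S ∈ ncDual G, T ⊆ S) ↔ memIdeal G Tᶜ := by
    intro T
    simp only [memIdeal, ncDual, Finset.mem_image]
    constructor
    · rintro ⟨S', ⟨S, hS, rfl⟩, h⟩
      exact ⟨S, hS, subsetComplComm.mpr h⟩
    · rintro ⟨S, hS, h⟩
      exact ⟨Sᶜ, ⟨S, hS, rfl⟩, subsetComplComm.mp h⟩
  simp only [this]
  rw [cardCompl he]
  simp only [compl_compl]

lemma isFIdeal_ncDual {G : Finset (Finset (Fin n))} (h : IsFIdeal G) :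
    IsFIdeal (ncDual G) := by
  intro e
  by_cases he : e ≤ n
  · have h1 : faceN (ncDual G) e + faceF G (n - e)
        = Nat.card {T : Finset (Fin n) | T.card = n - e} := by
      rw [faceN_ncDual he]
      exact cardSplit (n - e) (fun T => ∃ S ∈ G, T ⊆ S)
    have h2 : faceF (ncDual G) e + faceN G (n - e)
        = Nat.card {T : Finset (Fin n) | T.card = n - e} := by
      rw [faceF_ncDual he]
      rw [Nat.add_comm]
      exact cardSplit (n - e) (memIdeal G)
    have h3 := h (n - e)
    omega
  · unfold faceN faceF
    rw [faceEmpty (by omega), faceEmpty (by omega)]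

lemma ncDual_mem_Vset {d : ℕ} {G : Finset (Finset (Fin n))} (hG : G ∈ Vset n d) :
    ncDual G ∈ Vset n (n - d) := by
  obtain ⟨hac, hcard, hf⟩ := hG
  refine ⟨?_, ?_, isFIdeal_ncDual hf⟩
  · intro a ha b hb hab hle
    simp only [ncDual, Finset.coe_image, Set.mem_image, Finset.mem_coe] at ha hb
    obtain ⟨S, hS, rfl⟩ := ha
    obtain ⟨T, hT, rfl⟩ := hb
    exact hac hT hS (fun hTS => hab (by rw [hTS])) (compl_subset_compl.mp hle)
  · intro S' hS'
    simp only [ncDual, Finset.mem_image] at hS'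
    obtain ⟨S, hS, rfl⟩ := hS'
    simp [Finset.card_compl, hcard S hS]

end Aux

/-- For `n ≥ 1` and `1 ≤ d ≤ n - 1`, the Newton complementary dual `I ↦ Î` is a
bijection between `V(n,d)` and `V(n, n-d)`; in particular the two sets have the
same cardinality. -/
theorem bijOn_ncDual_Vset (n d : ℕ) (hn : 1 ≤ n) (hd1 : 1 ≤ d) (hd2 : d ≤ n - 1) :
    Set.BijOn (fun G : Finset (Finset (Fin n)) => ncDual G) (Vset n d) (Vset n (n - d)) ∧
      Nat.card (Vset n d) = Nat.card (Vset n (n - d)) := by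
  have key : Set.BijOn (fun G : Finset (Finset (Fin n)) => ncDual G) (Vset n d) (Vset n (n - d)) := by
    refine ⟨fun G hG => ncDual_mem_Vset hG, fun G hG G' hG' h => ?_, fun H hH => ?_⟩
    · have := congrArg ncDual h
      simpa [ncDual_ncDual] using this
    · refine ⟨ncDual H, ?_, ncDual_ncDual H⟩
      have : ncDual H ∈ Vset n (n - (n - d)) := ncDual_mem_Vset hH
      rwa [Nat.sub_sub_self (by omega)] at this
  exact ⟨key, Nat.card_congr key.equiv⟩
end

section
/- For n ≥ 3, V(n, n−2) ≠ ∅ if and only if n ≡ 0 (mod 4) or n ≡ 1 (mod 4). -/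
/-!
Encoding: a squarefree monomial of `k[x₁,…,xₙ]` is encoded by its support, a
`Finset (Fin n)` (the monomial `∏ i ∈ T, xᵢ` corresponds to `T`); its degree is
`T.card`, and divisibility of squarefree monomials is inclusion of supports.
A squarefree monomial ideal `I` is encoded by the antichain
`G : Finset (Finset (Fin n))` of supports of its unique minimal set of monomial
generators `G(I)`; the squarefree monomial with support `T` lies in `I` iff
`S ⊆ T` for some `S ∈ G`.
-/

open Finset

lemma natCard_coe {α : Type*} (F : Finset α) : Nat.card (↑F : Set α) = F.card := by
  rw [Nat.card_coe_set_eq, Set.ncard_coe_finset]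

lemma subset_compl_iff {n : ℕ} {p T : Finset (Fin n)} : p ⊆ Tᶜ ↔ T ⊆ pᶜ := by
  constructor
  · intro hp x hx
    rw [Finset.mem_compl]
    intro hxp
    exact Finset.mem_compl.mp (hp hxp) hx
  · intro hp x hx
    rw [Finset.mem_compl]
    intro hxT
    exact Finset.mem_compl.mp (hp hxT) hx

lemma compl_subset_iff {n : ℕ} {p T : Finset (Fin n)} : pᶜ ⊆ T ↔ Tᶜ ⊆ p := by
  constructor
  · intro hp x hx
    by_contra hxp
    exact Finset.mem_compl.mp hx (hp (Finset.mem_compl.mpr hxp))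
  · intro hp x hx
    by_contra hxT
    exact Finset.mem_compl.mp hx (hp (Finset.mem_compl.mpr hxT))

lemma faceF_eq {n d : ℕ} (G : Finset (Finset (Fin n))) (hG : ∀ S ∈ G, S.card = d) :
    faceF G d = G.card := by
  unfold faceF
  rw [show {T : Finset (Fin n) | T.card = d ∧ ∃ S ∈ G, T ⊆ S} = (↑G : Set (Finset (Fin n))) by
    ext T
    simp only [Set.mem_setOf_eq, Finset.mem_coe]
    constructor
    · rintro ⟨hc, S, hS, hTS⟩
      rwa [Finset.eq_of_subset_of_card_le hTS (by rw [hG S hS, hc])]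
    · intro hT
      exact ⟨hG T hT, T, hT, Finset.Subset.refl T⟩]
  exact natCard_coe G

lemma faceN_eq {n d : ℕ} (G : Finset (Finset (Fin n))) (hG : ∀ S ∈ G, S.card = d) :
    faceN G d = n.choose d - G.card := by
  classical
  have hsub : G ⊆ Finset.powersetCard d Finset.univ := by
    intro S hS
    rw [Finset.mem_powersetCard]
    exact ⟨Finset.subset_univ S, hG S hS⟩
  unfold faceN
  rw [show {T : Finset (Fin n) | T.card = d ∧ ¬ memIdeal G T}
      = (↑(Finset.powersetCard d Finset.univ \ G) : Set (Finset (Fin n))) by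
    ext T
    simp only [Set.mem_setOf_eq, Finset.coe_sdiff, Set.mem_diff, Finset.mem_coe,
      Finset.mem_powersetCard, memIdeal]
    constructor
    · rintro ⟨hc, hmem⟩
      exact ⟨⟨Finset.subset_univ T, hc⟩, fun hT => hmem ⟨T, hT, Finset.Subset.refl T⟩⟩
    · rintro ⟨⟨-, hc⟩, hT⟩
      refine ⟨hc, ?_⟩
      rintro ⟨S, hS, hST⟩
      exact hT (by rwa [← Finset.eq_of_subset_of_card_le hST (by rw [hG S hS, hc])])]
  rw [natCard_coe, Finset.card_sdiff_of_subset hsub, Finset.card_powersetCard, Finset.card_univ,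
    Fintype.card_fin]

lemma antichain_of_card {n d : ℕ} (G : Finset (Finset (Fin n)))
    (hG : ∀ S ∈ G, S.card = d) : IsAntichain (· ⊆ ·) (G : Set (Finset (Fin n))) := by
  intro S hS T hT hne hST
  exact hne (Finset.eq_of_subset_of_card_le hST (by rw [hG S hS, hG T hT]))

/-- For `n ≥ 3`, `V(n, n-2) ≠ ∅` iff `n ≡ 0 (mod 4)` or `n ≡ 1 (mod 4)`. -/
theorem Vset_degree_n_sub_two_nonempty (n : ℕ) (hn : 3 ≤ n) :
    (Vset n (n - 2)).Nonempty ↔ n % 4 = 0 ∨ n % 4 = 1 := by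
  classical
  constructor
  · rintro ⟨G, hA, hcard, hf⟩
    have e := hf (n - 2)
    rw [faceN_eq G hcard, faceF_eq G hcard] at e
    have hGle : G.card ≤ n.choose (n - 2) := by
      have hsub : G ⊆ Finset.powersetCard (n - 2) Finset.univ := by
        intro S hS
        rw [Finset.mem_powersetCard]
        exact ⟨Finset.subset_univ S, hcard S hS⟩
      calc G.card ≤ (Finset.powersetCard (n - 2) Finset.univ).card := Finset.card_le_card hsub
        _ = n.choose (n - 2) := by rw [Finset.card_powersetCard, Finset.card_univ, Fintype.card_fin]
    have h2 : n.choose (n - 2) = 2 * G.card := by omega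
    rw [Nat.choose_symm (by omega : 2 ≤ n), Nat.choose_two_right] at h2
    have heven : 2 ∣ n * (n - 1) := by
      rcases Nat.even_or_odd n with he | ho
      · exact Dvd.dvd.mul_right he.two_dvd _
      · have h1 := Nat.odd_iff.mp ho
        have h2 : 2 ∣ (n - 1) := by omega
        exact Dvd.dvd.mul_left h2 n
    have h4 : n * (n - 1) = 4 * G.card := by omega
    by_contra hcon
    push_neg at hcon
    have hr : n % 4 = 2 ∨ n % 4 = 3 := by omega
    have hmod : n * (n - 1) % 4 = 0 := by omega
    rw [Nat.mul_mod] at hmod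
    rcases hr with hr | hr
    · have h1 : (n - 1) % 4 = 1 := by omega
      rw [hr, h1] at hmod
      omega
    · have h1 : (n - 1) % 4 = 2 := by omega
      rw [hr, h1] at hmod
      omega
  · intro h4
    have hn4 : 4 ≤ n := by omega
    set h := n / 2 with hh
    have hdvd : 4 ∣ n * (n - 1) := by
      rcases h4 with h4 | h4
      · exact Dvd.dvd.mul_right (by omega) _
      · exact Dvd.dvd.mul_left (by omega) _
    obtain ⟨m, hm⟩ := hdvd
    have hh2 : 2 ≤ h := by omega
    have hnh2 : 2 ≤ n - h := by omega
    -- side A : indices < h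
    have hAbound : ∀ x ∈ Finset.range h, x < n := fun x hx => by
      have := Finset.mem_range.mp hx; omega
    set A : Finset (Fin n) := (Finset.range h).attachFin hAbound with hA
    have hmemA : ∀ a : Fin n, a ∈ A ↔ (a : ℕ) < h := by
      intro a
      rw [hA, Finset.mem_attachFin, Finset.mem_range]
    have hcardA : A.card = h := by
      rw [hA, Finset.card_attachFin, Finset.card_range]
    have hcardAc : Aᶜ.card = n - h := by
      rw [Finset.card_compl, hcardA, Fintype.card_fin]
    have hmemAc : ∀ a : Fin n, a ∈ Aᶜ ↔ h ≤ (a : ℕ) := by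
      intro a
      rw [Finset.mem_compl, hmemA]
      omega
    -- the cross pairs
    set Cross : Finset (Finset (Fin n)) :=
      (A ×ˢ Aᶜ).image (fun ab => {ab.1, ab.2}) with hCross
    have hCrossCard : Cross.card = h * (n - h) := by
      rw [hCross, Finset.card_image_of_injOn, Finset.card_product, hcardA, hcardAc]
      rintro ⟨a, b⟩ hab ⟨c, d⟩ hcd heq
      simp only [Finset.mem_coe, Finset.mem_product] at hab hcd
      have ha := (hmemA _).mp hab.1
      have hb := (hmemAc _).mp hab.2
      have hc := (hmemA _).mp hcd.1
      have hd := (hmemAc _).mp hcd.2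
      have heq' : ({a, b} : Finset (Fin n)) = {c, d} := heq
      have h1 : a ∈ ({c, d} : Finset (Fin n)) := by
        rw [← heq']; simp
      have h2 : b ∈ ({c, d} : Finset (Fin n)) := by
        rw [← heq']; simp
      simp only [Finset.mem_insert, Finset.mem_singleton] at h1 h2
      have hac : a = c := by
        rcases h1 with h1 | h1
        · exact h1
        · subst h1; omega
      have hbd : b = d := by
        rcases h2 with h2 | h2
        · subst h2; omega
        · exact h2
      rw [Prod.mk.injEq]
      exact ⟨hac, hbd⟩
    have hCrossMem : ∀ p ∈ Cross, (∃ a ∈ p, (a : ℕ) < h) ∧ (∃ b ∈ p, h ≤ (b : ℕ)) := by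
      intro p hp
      rw [hCross, Finset.mem_image] at hp
      obtain ⟨⟨a, b⟩, hab, rfl⟩ := hp
      simp only [Finset.mem_product] at hab
      exact ⟨⟨a, by simp, (hmemA _).mp hab.1⟩, ⟨b, by simp, (hmemAc _).mp hab.2⟩⟩
    have hCrossPairs : Cross ⊆ Finset.powersetCard 2 Finset.univ := by
      intro p hp
      rw [hCross, Finset.mem_image] at hp
      obtain ⟨⟨a, b⟩, hab, rfl⟩ := hp
      simp only [Finset.mem_product] at hab
      have hne : a ≠ b := by
        have ha := (hmemA _).mp hab.1
        have hb := (hmemAc _).mp hab.2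
        intro hcon; subst hcon; omega
      rw [Finset.mem_powersetCard]
      exact ⟨Finset.subset_univ _, Finset.card_pair hne⟩
    -- m ≤ |Cross|
    have hmle : m ≤ h * (n - h) := by
      rcases Nat.even_or_odd n with ⟨t, ht⟩ | ⟨t, ht⟩
      · have hnn : n - h = h := by omega
        rw [hnn]
        have e1 : n * (n - 1) ≤ n * n := Nat.mul_le_mul le_rfl (Nat.sub_le n 1)
        have e2 : n * n = 4 * (h * h) := by
          have hht : h = t := by omega
          rw [ht, hht]; ring
        omega
      · have hnn : n - h = h + 1 := by omega
        rw [hnn]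
        have e2 : n * (n - 1) = 4 * (h * h) + 2 * h := by
          have h1 : n - 1 = 2 * h := by omega
          have hht : h = t := by omega
          rw [h1, ht, hht]; ring
        have e3 : h * (h + 1) = h * h + h := by ring
        omega
    obtain ⟨Eb, hEbsub, hEbcard⟩ := Finset.exists_subset_card_eq (hCrossCard ▸ hmle)
    set Pairs : Finset (Finset (Fin n)) := Finset.powersetCard 2 Finset.univ with hPairs
    have hEbPairs : Eb ⊆ Pairs := hEbsub.trans hCrossPairs
    have hPairsCard : Pairs.card = 2 * m := by
      rw [hPairs, Finset.card_powersetCard, Finset.card_univ, Fintype.card_fin,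
        Nat.choose_two_right]
      omega
    set E : Finset (Finset (Fin n)) := Pairs \ Eb with hE
    have hEcard : E.card = m := by
      rw [hE, Finset.card_sdiff_of_subset hEbPairs, hPairsCard, hEbcard]
      omega
    have hEpair : ∀ p ∈ E, p.card = 2 := by
      intro p hp
      rw [hE, Finset.mem_sdiff, hPairs, Finset.mem_powersetCard] at hp
      exact hp.1.2
    -- same-side pairs are in E
    have hSameSide : ∀ a b : Fin n, a ≠ b →
        (((a : ℕ) < h ∧ (b : ℕ) < h) ∨ (h ≤ (a : ℕ) ∧ h ≤ (b : ℕ))) →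
        ({a, b} : Finset (Fin n)) ∈ E := by
      intro a b hne hside
      rw [hE, Finset.mem_sdiff]
      constructor
      · rw [hPairs, Finset.mem_powersetCard]
        exact ⟨Finset.subset_univ _, Finset.card_pair hne⟩
      · intro hmem
        have := hCrossMem _ (hEbsub hmem)
        obtain ⟨⟨x, hx, hxlt⟩, ⟨y, hy, hyge⟩⟩ := this
        simp only [Finset.mem_insert, Finset.mem_singleton] at hx hy
        rcases hside with ⟨h1, h2⟩ | ⟨h1, h2⟩
        · rcases hy with rfl | rfl <;> omega
        · rcases hx with rfl | rfl <;> omega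
    -- small sets are contained in a member of E
    have hm12 : 12 ≤ 4 * m := by
      calc 12 = 4 * 3 := by norm_num
        _ ≤ n * (n - 1) := Nat.mul_le_mul (by omega) (by omega)
        _ = 4 * m := hm
    have hEsmall : ∀ W : Finset (Fin n), W.card ≤ 1 → ∃ p ∈ E, W ⊆ p := by
      intro W hW
      rcases Finset.eq_empty_or_nonempty W with hWe | hWne
      · have hEne : E.Nonempty := by
          rw [← Finset.card_pos, hEcard]
          omega
        obtain ⟨p, hp⟩ := hEne
        exact ⟨p, hp, by simp [hWe]⟩
      · have hWc : W.card = 1 := by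
          have := Finset.card_pos.mpr hWne
          omega
        obtain ⟨v, hv⟩ := Finset.card_eq_one.mp hWc
        rw [hv]
        by_cases hvh : (v : ℕ) < h
        · have hA1 : 1 < A.card := by omega
          obtain ⟨u, hu, w, hw, huw⟩ := Finset.one_lt_card.mp hA1
          have hu' := (hmemA _).mp hu
          have hw' := (hmemA _).mp hw
          rcases eq_or_ne u v with rfl | hne
          · exact ⟨{u, w}, hSameSide u w huw (Or.inl ⟨hvh, hw'⟩), by simp⟩
          · exact ⟨{v, u}, hSameSide v u (Ne.symm hne) (Or.inl ⟨hvh, hu'⟩), by simp⟩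
        · have hA1 : 1 < Aᶜ.card := by omega
          obtain ⟨u, hu, w, hw, huw⟩ := Finset.one_lt_card.mp hA1
          have hu' := (hmemAc _).mp hu
          have hw' := (hmemAc _).mp hw
          rcases eq_or_ne u v with rfl | hne
          · exact ⟨{u, w}, hSameSide u w huw (Or.inr ⟨by omega, hw'⟩), by simp⟩
          · exact ⟨{v, u}, hSameSide v u (Ne.symm hne) (Or.inr ⟨by omega, hu'⟩), by simp⟩
    -- big sets contain a member of E
    have hEbig : ∀ W : Finset (Fin n), 3 ≤ W.card → ∃ p ∈ E, p ⊆ W := by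
      intro W hW
      set W1 := W.filter (fun a : Fin n => (a : ℕ) < h) with hW1
      set W2 := W.filter (fun a : Fin n => ¬ ((a : ℕ) < h)) with hW2
      have hsum : W1.card + W2.card = W.card :=
        Finset.card_filter_add_card_filter_not (s := W) (p := fun a : Fin n => (a : ℕ) < h)
      rcases Nat.lt_or_ge 1 W1.card with h1 | h1
      · obtain ⟨u, hu, w, hw, huw⟩ := Finset.one_lt_card.mp h1
        rw [hW1, Finset.mem_filter] at hu hw
        refine ⟨{u, w}, hSameSide u w huw (Or.inl ⟨hu.2, hw.2⟩), ?_⟩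
        intro x hx
        simp only [Finset.mem_insert, Finset.mem_singleton] at hx
        rcases hx with rfl | rfl
        · exact hu.1
        · exact hw.1
      · have h2 : 1 < W2.card := by omega
        obtain ⟨u, hu, w, hw, huw⟩ := Finset.one_lt_card.mp h2
        rw [hW2, Finset.mem_filter] at hu hw
        refine ⟨{u, w}, hSameSide u w huw (Or.inr ⟨by omega, by omega⟩), ?_⟩
        intro x hx
        simp only [Finset.mem_insert, Finset.mem_singleton] at hx
        rcases hx with rfl | rfl
        · exact hu.1
        · exact hw.1
    -- the ideal
    set G : Finset (Finset (Fin n)) := E.image (fun p => pᶜ) with hG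
    have hGcard : G.card = m := by
      rw [hG, Finset.card_image_of_injective _ compl_injective, hEcard]
    have hGd : ∀ S ∈ G, S.card = n - 2 := by
      intro S hS
      rw [hG, Finset.mem_image] at hS
      obtain ⟨p, hp, rfl⟩ := hS
      rw [Finset.card_compl, Fintype.card_fin, hEpair p hp]
    have hmemG : ∀ T : Finset (Fin n), memIdeal G T ↔ ∃ p ∈ E, Tᶜ ⊆ p := by
      intro T
      unfold memIdeal
      rw [hG]
      constructor
      · rintro ⟨S, hS, hST⟩
        rw [Finset.mem_image] at hS
        obtain ⟨p, hp, rfl⟩ := hS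
        exact ⟨p, hp, compl_subset_iff.mp hST⟩
      · rintro ⟨p, hp, hTp⟩
        exact ⟨pᶜ, Finset.mem_image_of_mem _ hp, compl_subset_iff.mpr hTp⟩
    have hsubG : ∀ T : Finset (Fin n), (∃ S ∈ G, T ⊆ S) ↔ ∃ p ∈ E, p ⊆ Tᶜ := by
      intro T
      rw [hG]
      constructor
      · rintro ⟨S, hS, hST⟩
        rw [Finset.mem_image] at hS
        obtain ⟨p, hp, rfl⟩ := hS
        exact ⟨p, hp, subset_compl_iff.mpr hST⟩
      · rintro ⟨p, hp, hTp⟩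
        exact ⟨pᶜ, Finset.mem_image_of_mem _ hp, subset_compl_iff.mp hTp⟩
    refine ⟨G, antichain_of_card G hGd, hGd, ?_⟩
    intro d
    by_cases hd3 : d + 3 ≤ n
    · -- both sets are all d-subsets
      unfold faceN faceF
      rw [show {T : Finset (Fin n) | T.card = d ∧ ¬ memIdeal G T}
          = {T : Finset (Fin n) | T.card = d ∧ ∃ S ∈ G, T ⊆ S} from ?_]
      ext T
      simp only [Set.mem_setOf_eq]
      constructor
      · rintro ⟨hc, -⟩
        refine ⟨hc, ?_⟩
        rw [hsubG]
        have hTc : 3 ≤ Tᶜ.card := by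
          rw [Finset.card_compl, Fintype.card_fin, hc]; omega
        obtain ⟨U, hU, hUc⟩ := Finset.exists_subset_card_eq hTc
        obtain ⟨p, hp, hpU⟩ := hEbig U (le_of_eq hUc.symm)
        exact ⟨p, hp, hpU.trans hU⟩
      · rintro ⟨hc, -⟩
        refine ⟨hc, ?_⟩
        rw [hmemG]
        rintro ⟨p, hp, hTp⟩
        have h1 : Tᶜ.card ≤ p.card := Finset.card_le_card hTp
        rw [Finset.card_compl, Fintype.card_fin, hc, hEpair p hp] at h1
        omega
    · by_cases hd2 : d = n - 2
      · subst hd2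
        rw [faceN_eq G hGd, faceF_eq G hGd, hGcard,
          Nat.choose_symm (by omega : 2 ≤ n), Nat.choose_two_right]
        omega
      · -- d ≥ n - 1 : both sets empty
        have hd : n - 1 ≤ d := by omega
        unfold faceN faceF
        rw [show {T : Finset (Fin n) | T.card = d ∧ ¬ memIdeal G T}
            = {T : Finset (Fin n) | T.card = d ∧ ∃ S ∈ G, T ⊆ S} from ?_]
        ext T
        simp only [Set.mem_setOf_eq]
        constructor
        · rintro ⟨hc, hmem⟩
          exfalso
          apply hmem
          rw [hmemG]
          apply hEsmall
          rw [Finset.card_compl, Fintype.card_fin, hc]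
          omega
        · rintro ⟨hc, S, hS, hTS⟩
          exfalso
          have h1 : T.card ≤ S.card := Finset.card_le_card hTS
          rw [hc, hGd S hS] at h1
          omega
end

section
/- Let I be an f-ideal in R = k[x_1,…,x_n] with common f-vector f = f(δ_F(I)) = f(δ_N(I)), and let α = α(I). Then f_{α−1} ≥ (1/2)·C(n, α). -/
/-!
Encoding: a squarefree monomial of `k[x₁,…,xₙ]` is encoded by its support, a
`Finset (Fin n)` (the monomial `∏ i ∈ T, xᵢ` corresponds to `T`); its degree is
`T.card`, and divisibility of squarefree monomials is inclusion of supports.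
A squarefree monomial ideal `I` is encoded by the antichain
`G : Finset (Finset (Fin n))` of supports of its unique minimal set of monomial
generators `G(I)`; the squarefree monomial with support `T` lies in `I` iff
`S ⊆ T` for some `S ∈ G`.
-/

open Finset

/-- `α(I)`, the minimal degree of a minimal generator of `I`. -/
noncomputable def alphaI {n : ℕ} (G : Finset (Finset (Fin n))) : ℕ :=
  sInf (Finset.card '' (G : Set (Finset (Fin n))))

/-- `ω(I)`, the maximal degree of a minimal generator of `I`. -/
noncomputable def omegaI {n : ℕ} (G : Finset (Finset (Fin n))) : ℕ :=
  sSup (Finset.card '' (G : Set (Finset (Fin n))))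

/-- If `I` is an f-ideal with common f-vector `f = f(δ_F(I)) = f(δ_N(I))` and
`α = α(I)`, then `f_{α-1} ≥ (1/2)·C(n, α)` (f-vector entry of dimension `α - 1`
= face count at cardinality `α`). -/
theorem fvector_alpha_ge_half_choose {n : ℕ} (G : Finset (Finset (Fin n)))
    (hG : IsAntichain (· ⊆ ·) (G : Set (Finset (Fin n))))
    (hne : G.Nonempty) (hf : IsFIdeal G) :
    n.choose (alphaI G) ≤ 2 * faceN G (alphaI G) := by
  set a := alphaI G with ha
  -- every set of card a is in the ideal iff it is a generator
  have key : ∀ T : Finset (Fin n), T.card = a → (memIdeal G T ↔ T ∈ G) := by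
    intro T hT
    constructor
    · rintro ⟨S, hS, hsub⟩
      have h1 : a ≤ S.card := Nat.sInf_le ⟨S, hS, rfl⟩
      have h2 : S.card ≤ T.card := Finset.card_le_card hsub
      have hST : S = T := Finset.eq_of_subset_of_card_le hsub (by omega)
      rwa [← hST]
    · intro h; exact ⟨T, h, Finset.Subset.refl T⟩
  have hN : faceN G a = ({T : Finset (Fin n) | T.card = a ∧ T ∉ G}).ncard := by
    rw [faceN, Nat.card_coe_set_eq]
    congr 1
    ext T
    simp only [Set.mem_setOf_eq]
    exact and_congr_right fun h => not_congr (key T h)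
  have hF : faceF G a = ({T : Finset (Fin n) | T.card = a ∧ ∃ S ∈ G, T ⊆ S}).ncard := by
    rw [faceF, Nat.card_coe_set_eq]
  have hGsub : ({T : Finset (Fin n) | T.card = a ∧ T ∈ G}).ncard ≤ faceF G a := by
    rw [hF]
    apply Set.ncard_le_ncard
    · rintro T ⟨hT, hTG⟩
      exact ⟨hT, T, hTG, Finset.Subset.refl T⟩
    · exact Set.toFinite _
  have htot : ({T : Finset (Fin n) | T.card = a}).ncard = n.choose a := by
    rw [Set.ncard_eq_toFinset_card']
    rw [← Fintype.card_coe]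
    have : Fintype.card ({T : Finset (Fin n) | T.card = a}).toFinset
        = Fintype.card {T : Finset (Fin n) // T.card = a} := by
      apply Fintype.card_congr
      apply Equiv.subtypeEquiv (Equiv.refl _)
      intro T
      simp
    rw [this, Fintype.card_finset_len, Fintype.card_fin]
  have hsplit : ({T : Finset (Fin n) | T.card = a}).ncard
      = ({T : Finset (Fin n) | T.card = a ∧ T ∉ G}).ncard
        + ({T : Finset (Fin n) | T.card = a ∧ T ∈ G}).ncard := by
    rw [← Set.ncard_union_eq]
    · congr 1
      ext T
      simp only [Set.mem_setOf_eq, Set.mem_union]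
      tauto
    · rw [Set.disjoint_left]
      rintro T ⟨-, hT⟩ ⟨-, hT'⟩
      exact hT hT'
  have hfa := hf a
  omega
end

section
/- Let I be an f-ideal in R = k[x_1,…,x_n] with common f-vector f = f(δ_F(I)) = f(δ_N(I)), and let ω = ω(I). Then f_{ω−1} ≤ (1/2)·C(n, ω). -/
/-!
Encoding: a squarefree monomial of `k[x₁,…,xₙ]` is encoded by its support, a
`Finset (Fin n)` (the monomial `∏ i ∈ T, xᵢ` corresponds to `T`); its degree is
`T.card`, and divisibility of squarefree monomials is inclusion of supports.
A squarefree monomial ideal `I` is encoded by the antichain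
`G : Finset (Finset (Fin n))` of supports of its unique minimal set of monomial
generators `G(I)`; the squarefree monomial with support `T` lies in `I` iff
`S ⊆ T` for some `S ∈ G`.
-/

open Finset

/-- If `I` is an f-ideal with common f-vector `f = f(δ_F(I)) = f(δ_N(I))` and
`ω = ω(I)`, then `f_{ω-1} ≤ (1/2)·C(n, ω)` (f-vector entry of dimension `ω - 1`
= face count at cardinality `ω`). -/
theorem fvector_omega_le_half_choose {n : ℕ} (G : Finset (Finset (Fin n)))
    (hG : IsAntichain (· ⊆ ·) (G : Set (Finset (Fin n))))
    (hne : G.Nonempty) (hf : IsFIdeal G) :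
    2 * faceN G (omegaI G) ≤ n.choose (omegaI G) := by
  set ω := omegaI G with hω
  have hbdd : ∀ S ∈ G, S.card ≤ ω := by
    intro S hS
    exact le_csSup ((G : Set (Finset (Fin n))).toFinite.image _).bddAbove ⟨S, hS, rfl⟩
  have hF : {T : Finset (Fin n) | T.card = ω ∧ ∃ S ∈ G, T ⊆ S}
      = {T : Finset (Fin n) | T.card = ω ∧ T ∈ G} := by
    ext T
    simp only [Set.mem_setOf_eq]
    constructor
    · rintro ⟨hc, S, hS, hTS⟩
      have hTS' : T = S := Finset.eq_of_subset_of_card_le hTS (hc ▸ hbdd S hS)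
      exact ⟨hc, hTS' ▸ hS⟩
    · rintro ⟨hc, hT⟩
      exact ⟨hc, T, hT, Finset.Subset.rfl⟩
  have hdisj : Disjoint {T : Finset (Fin n) | T.card = ω ∧ ¬ memIdeal G T}
      {T : Finset (Fin n) | T.card = ω ∧ T ∈ G} := by
    rw [Set.disjoint_left]
    rintro T ⟨_, hnm⟩ ⟨_, hT⟩
    exact hnm ⟨T, hT, Finset.Subset.rfl⟩
  have h1 : faceN G ω = ({T : Finset (Fin n) | T.card = ω ∧ ¬ memIdeal G T}).ncard := rfl
  have h2 : faceF G ω = ({T : Finset (Fin n) | T.card = ω ∧ T ∈ G}).ncard := by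
    rw [← hF]; rfl
  have hsum : 2 * faceN G ω = ({T : Finset (Fin n) | T.card = ω ∧ ¬ memIdeal G T}
      ∪ {T : Finset (Fin n) | T.card = ω ∧ T ∈ G}).ncard := by
    rw [Set.ncard_union_eq hdisj (Set.toFinite _) (Set.toFinite _), ← h1, ← h2,
      ← hf ω, two_mul]
  rw [hsum]
  have hsub : ({T : Finset (Fin n) | T.card = ω ∧ ¬ memIdeal G T}
      ∪ {T : Finset (Fin n) | T.card = ω ∧ T ∈ G})
      ⊆ {T : Finset (Fin n) | T.card = ω} := by
    rintro T (⟨hc, -⟩ | ⟨hc, -⟩) <;> exact hc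
  have hall : ({T : Finset (Fin n) | T.card = ω}).ncard = n.choose ω := by
    rw [Set.ncard_eq_toFinset_card']
    have : ({T : Finset (Fin n) | T.card = ω}).toFinset
        = Finset.powersetCard ω Finset.univ := by
      ext T; simp
    rw [this, Finset.card_powersetCard, Finset.card_univ, Fintype.card_fin]
  calc _ ≤ ({T : Finset (Fin n) | T.card = ω}).ncard :=
        Set.ncard_le_ncard hsub (Set.toFinite _)
    _ = n.choose ω := hall
end

section
/- Let I be an f-ideal in R = k[x_1,…,x_n] with common f-vector f = f(δ_F(I)) = f(δ_N(I)). If α(I) = ω(I) = α (i.e., I is equigenerated in degree α), then f_{α−1} = (1/2)·C(n, α). -/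
/-!
Encoding: a squarefree monomial of `k[x₁,…,xₙ]` is encoded by its support, a
`Finset (Fin n)` (the monomial `∏ i ∈ T, xᵢ` corresponds to `T`); its degree is
`T.card`, and divisibility of squarefree monomials is inclusion of supports.
A squarefree monomial ideal `I` is encoded by the antichain
`G : Finset (Finset (Fin n))` of supports of its unique minimal set of monomial
generators `G(I)`; the squarefree monomial with support `T` lies in `I` iff
`S ⊆ T` for some `S ∈ G`.
-/

open Finset

/-- If `I` is an f-ideal with common f-vector `f = f(δ_F(I)) = f(δ_N(I))` that is
equigenerated in degree `α` (i.e. `α(I) = ω(I) = α`), then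
`f_{α-1} = (1/2)·C(n, α)` (f-vector entry of dimension `α - 1` = face count at
cardinality `α`). -/
theorem fvector_alpha_eq_half_choose {n : ℕ} (G : Finset (Finset (Fin n)))
    (hG : IsAntichain (· ⊆ ·) (G : Set (Finset (Fin n))))
    (hne : G.Nonempty) (hf : IsFIdeal G) (heq : alphaI G = omegaI G) :
    2 * faceN G (alphaI G) = n.choose (alphaI G) := by
  classical
  set α := alphaI G with hα
  have hbdd : BddAbove (Finset.card '' (G : Set (Finset (Fin n)))) :=
    (G.finite_toSet.image _).bddAbove
  have hcard : ∀ S ∈ G, S.card = α := by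
    intro S hS
    have h1 : α ≤ S.card := Nat.sInf_le ⟨S, hS, rfl⟩
    have h2 : S.card ≤ omegaI G := le_csSup hbdd ⟨S, hS, rfl⟩
    omega
  have hF : faceF G α = G.card := by
    have hset : {T : Finset (Fin n) | T.card = α ∧ ∃ S ∈ G, T ⊆ S} = ↑G := by
      ext T
      simp only [Set.mem_setOf_eq, mem_coe]
      constructor
      · rintro ⟨hT, S, hS, hTS⟩
        rwa [Finset.eq_of_subset_of_card_le hTS (by rw [hcard S hS, hT])]
      · intro hT; exact ⟨hcard T hT, T, hT, subset_rfl⟩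
    rw [faceF, hset, Nat.card_coe_set_eq, Set.ncard_coe_finset]
  have hN : faceN G α = (univ.powersetCard α \ G).card := by
    have hset : {T : Finset (Fin n) | T.card = α ∧ ¬ memIdeal G T}
        = ↑(univ.powersetCard α \ G) := by
      ext T
      simp only [Set.mem_setOf_eq, coe_sdiff, Set.mem_diff, mem_coe,
        Finset.mem_powersetCard, memIdeal]
      constructor
      · rintro ⟨hT, hni⟩
        exact ⟨⟨subset_univ T, hT⟩, fun h => hni ⟨T, h, subset_rfl⟩⟩
      · rintro ⟨⟨-, hT⟩, hTG⟩
        refine ⟨hT, ?_⟩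
        rintro ⟨S, hS, hST⟩
        exact hTG (by
          rwa [← Finset.eq_of_subset_of_card_le hST (by rw [hcard S hS, hT])])
    rw [faceN, hset, Nat.card_coe_set_eq, Set.ncard_coe_finset]
  have hsub : G ⊆ univ.powersetCard α := fun S hS =>
    Finset.mem_powersetCard.2 ⟨subset_univ S, hcard S hS⟩
  have hle : G.card ≤ (univ.powersetCard α).card := Finset.card_le_card hsub
  have hchoose : ((univ : Finset (Fin n)).powersetCard α).card = n.choose α := by
    rw [Finset.card_powersetCard, Finset.card_univ, Fintype.card_fin]
  have hfe := hf α
  rw [hN, hF, Finset.card_sdiff_of_subset hsub] at hfe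
  rw [hN, Finset.card_sdiff_of_subset hsub]
  omega
end

section
/- Let I be an f-ideal in R = k[x_1,…,x_n] and let ω = ω(I). Then dim δ_F(I) = dim δ_N(I) = ω − 1 ≤ n − 2. -/
/-!
Encoding: a squarefree monomial of `k[x₁,…,xₙ]` is encoded by its support, a
`Finset (Fin n)` (the monomial `∏ i ∈ T, xᵢ` corresponds to `T`); its degree is
`T.card`, and divisibility of squarefree monomials is inclusion of supports.
A squarefree monomial ideal `I` is encoded by the antichain
`G : Finset (Finset (Fin n))` of supports of its unique minimal set of monomial
generators `G(I)`; the squarefree monomial with support `T` lies in `I` iff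
`S ⊆ T` for some `S ∈ G`.
-/

open Finset

/-- The dimension of the facet complex `δ_F(I)`: the maximum dimension `d`
(= cardinality minus one) of a face. -/
noncomputable def dimF {n : ℕ} (G : Finset (Finset (Fin n))) : ℕ :=
  sSup {d : ℕ | 0 < faceF G (d + 1)}

/-- The dimension of the non-face complex `δ_N(I)`: the maximum dimension `d`
(= cardinality minus one) of a face. -/
noncomputable def dimN {n : ℕ} (G : Finset (Finset (Fin n))) : ℕ :=
  sSup {d : ℕ | 0 < faceN G (d + 1)}

/-!
A face of `δ_F(I)` is a subset of a generator, so `δ_F(I)` has faces of every size up to `ω`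
and none larger: `dim δ_F(I) = ω - 1` for every ideal, and the f-ideal condition transfers
this to `δ_N(I)`. For the bound, a generator `S` of an f-ideal yields a non-face of size
`|S|`, which is impossible if `S = ∅` (everything is then a non-face) or `S = {x₁,…,xₙ}`
(the only set of that size contains `S`); hence `1 ≤ ω ≤ n - 1`.
-/

section FVector

variable {n : ℕ} (G : Finset (Finset (Fin n)))

lemma faceN_pos_iff (d : ℕ) :
    0 < faceN G d ↔ ∃ T : Finset (Fin n), T.card = d ∧ ¬ memIdeal G T := by
  rw [faceN, Nat.card_pos_iff]
  exact ⟨fun ⟨⟨⟨T, hT⟩⟩, _⟩ => ⟨T, hT⟩, fun ⟨T, hT⟩ => ⟨⟨⟨T, hT⟩⟩, inferInstance⟩⟩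

lemma faceF_pos_iff (d : ℕ) :
    0 < faceF G d ↔ ∃ T : Finset (Fin n), T.card = d ∧ ∃ S ∈ G, T ⊆ S := by
  rw [faceF, Nat.card_pos_iff]
  exact ⟨fun ⟨⟨⟨T, hT⟩⟩, _⟩ => ⟨T, hT⟩, fun ⟨T, hT⟩ => ⟨⟨⟨T, hT⟩⟩, inferInstance⟩⟩

lemma bddAbove_card_image : BddAbove (Finset.card '' (G : Set (Finset (Fin n)))) :=
  ((G : Set (Finset (Fin n))).toFinite.image _).bddAbove

lemma card_le_omegaI {S : Finset (Fin n)} (hS : S ∈ G) : S.card ≤ omegaI G :=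
  le_csSup (bddAbove_card_image G) ⟨S, hS, rfl⟩

lemma exists_mem_card_eq_omegaI (hne : G.Nonempty) : ∃ S ∈ G, S.card = omegaI G :=
  Nat.sSup_mem ((coe_nonempty.2 hne).image _) (bddAbove_card_image G)

lemma faceF_succ_pos_iff (d : ℕ) : 0 < faceF G (d + 1) ↔ d + 1 ≤ omegaI G := by
  rw [faceF_pos_iff]
  constructor
  · rintro ⟨T, hT, S, hS, hTS⟩
    exact hT ▸ (card_le_card hTS).trans (card_le_omegaI G hS)
  · intro hd
    obtain ⟨S, hS, hScard⟩ := exists_mem_card_eq_omegaI G <| nonempty_iff_ne_empty.2 <| by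
      rintro rfl
      simp [omegaI] at hd
    obtain ⟨T, hTS, hT⟩ := exists_subset_card_eq (s := S) (n := d + 1) (hScard ▸ hd)
    exact ⟨T, hT, S, hS, hTS⟩

/-- When `G = ∅` both sides are junk `0`: `sSup ∅ = 0` and `0 - 1 = 0`. -/
theorem dimF_eq_omegaI_sub_one : dimF G = omegaI G - 1 := by
  have hdims : {d : ℕ | 0 < faceF G (d + 1)} = Set.Iio (omegaI G) :=
    Set.ext fun d => (faceF_succ_pos_iff G d).trans Nat.succ_le_iff
  rw [dimF, hdims]
  rcases omegaI G with _ | k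
  · simp
  · rw [Set.Iio_add_one_eq_Iic, csSup_Iic, Nat.add_sub_cancel]

variable {G}

lemma dimN_eq_dimF (hf : IsFIdeal G) : dimN G = dimF G := by
  simp only [dimN, dimF, hf _]

lemma IsFIdeal.exists_card_eq_not_superset (hf : IsFIdeal G) {S : Finset (Fin n)}
    (hS : S ∈ G) : ∃ T : Finset (Fin n), T.card = S.card ∧ ¬ S ⊆ T := by
  have hF : 0 < faceF G S.card := (faceF_pos_iff G _).2 ⟨S, rfl, S, hS, subset_rfl⟩
  obtain ⟨T, hT, hTN⟩ := (faceN_pos_iff G _).1 (hf S.card ▸ hF)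
  exact ⟨T, hT, fun hST => hTN ⟨S, hS, hST⟩⟩

lemma IsFIdeal.empty_notMem (hf : IsFIdeal G) : ∅ ∉ G := fun h => by
  obtain ⟨T, -, hT⟩ := hf.exists_card_eq_not_superset h
  exact hT (empty_subset T)

lemma IsFIdeal.univ_notMem (hf : IsFIdeal G) : univ ∉ G := fun h => by
  obtain ⟨T, hcard, hT⟩ := hf.exists_card_eq_not_superset h
  exact hT (eq_univ_of_card T hcard).ge

end FVector

theorem dim_facet_eq_dim_nonface_general {n : ℕ} (G : Finset (Finset (Fin n)))
    (hne : G.Nonempty) (hf : IsFIdeal G) :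
    dimF G = omegaI G - 1 ∧ dimN G = omegaI G - 1 ∧ omegaI G - 1 ≤ n - 2 := by
  obtain ⟨S, hS, hScard⟩ := exists_mem_card_eq_omegaI G hne
  have hω_pos : 0 < omegaI G :=
    hScard ▸ card_pos.2 (nonempty_iff_ne_empty.2 (ne_of_mem_of_not_mem hS hf.empty_notMem))
  have hω_lt : omegaI G < n := by
    simpa [hScard] using (card_lt_iff_ne_univ S).2 (ne_of_mem_of_not_mem hS hf.univ_notMem)
  refine ⟨dimF_eq_omegaI_sub_one G, ?_, by omega⟩
  rw [dimN_eq_dimF hf, dimF_eq_omegaI_sub_one]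

/-- If `I` is an f-ideal and `ω = ω(I)`, then
`dim δ_F(I) = dim δ_N(I) = ω - 1 ≤ n - 2`. -/
theorem dim_facet_eq_dim_nonface {n : ℕ} (G : Finset (Finset (Fin n)))
    (hG : IsAntichain (· ⊆ ·) (G : Set (Finset (Fin n))))
    (hne : G.Nonempty) (hf : IsFIdeal G) :
    dimF G = omegaI G - 1 ∧ dimN G = omegaI G - 1 ∧ omegaI G - 1 ≤ n - 2 :=
  dim_facet_eq_dim_nonface_general G hne hf
end

section
/- Let I be an f-ideal of k[x_1,…,x_n] with α(I) < ω(I), and let f = f(δ_F(I)) = f(δ_N(I)) be its common f-vector and α = α(I). If f_{α−1} > C(n, α) − n + α, then I has a minimal generator of degree α + 1. -/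
/-!
Encoding: a squarefree monomial of `k[x₁,…,xₙ]` is encoded by its support, a
`Finset (Fin n)` (the monomial `∏ i ∈ T, xᵢ` corresponds to `T`); its degree is
`T.card`, and divisibility of squarefree monomials is inclusion of supports.
A squarefree monomial ideal `I` is encoded by the antichain
`G : Finset (Finset (Fin n))` of supports of its unique minimal set of monomial
generators `G(I)`; the squarefree monomial with support `T` lies in `I` iff
`S ⊆ T` for some `S ∈ G`.
-/

open Finset

lemma natCard_setOf_eq_filter {β : Type*} [Fintype β] [DecidableEq β] (p : β → Prop)
    [DecidablePred p] :
    Nat.card {x : β | p x} = (Finset.univ.filter p).card := by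
  rw [Nat.card_eq_fintype_card]
  simp [Fintype.card_subtype]

/-- Let `I` be an f-ideal with `α(I) < ω(I)`, common f-vector
`f = f(δ_F(I)) = f(δ_N(I))` and `α = α(I)`.  If `f_{α-1} > C(n, α) - n + α`
(f-vector entry of dimension `α - 1` = face count at cardinality `α`), then `I`
has a minimal generator of degree `α + 1`. -/
theorem exists_generator_of_degree_alpha_succ {n : ℕ} (G : Finset (Finset (Fin n)))
    (hG : IsAntichain (· ⊆ ·) (G : Set (Finset (Fin n))))
    (hne : G.Nonempty) (hf : IsFIdeal G) (hlt : alphaI G < omegaI G)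
    (h : (n.choose (alphaI G) : ℤ) - n + alphaI G < (faceN G (alphaI G) : ℤ)) :
    ∃ S ∈ G, S.card = alphaI G + 1 := by
  classical
  by_contra hcon
  push_neg at hcon
  set α := alphaI G with hαdef
  -- α is achieved and is a lower bound
  have hα_le : ∀ S ∈ G, α ≤ S.card := fun S hS =>
    Nat.sInf_le ⟨S, Finset.mem_coe.mpr hS, rfl⟩
  obtain ⟨S₀, hS₀G, hS₀card⟩ :
      ∃ S, S ∈ G ∧ S.card = α := by
    have hα_mem : α ∈ Finset.card '' (G : Set (Finset (Fin n))) :=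
      Nat.sInf_mem (hne.to_set.image _)
    obtain ⟨S, hS, hcard⟩ := hα_mem
    exact ⟨S, Finset.mem_coe.mp hS, hcard⟩
  -- membership in the ideal at cardinality α means being a generator
  have hmemα : ∀ T : Finset (Fin n), T.card = α → (memIdeal G T ↔ T ∈ G) := by
    intro T hT
    constructor
    · rintro ⟨S, hSG, hST⟩
      have h1 : α ≤ S.card := hα_le S hSG
      have h2 : S = T := Finset.eq_of_subset_of_card_le hST (by omega)
      exact h2 ▸ hSG
    · intro hT'
      exact ⟨T, hT', Finset.Subset.refl T⟩
  -- counting sets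
  have hNcount : ∀ d, faceN G d =
      (Finset.univ.filter fun T : Finset (Fin n) => T.card = d ∧ ¬ memIdeal G T).card :=
    fun d => natCard_setOf_eq_filter _
  have hFcount : ∀ d, faceF G d =
      (Finset.univ.filter fun T : Finset (Fin n) => T.card = d ∧ ∃ S ∈ G, T ⊆ S).card :=
    fun d => natCard_setOf_eq_filter _
  set Nα := Finset.univ.filter fun T : Finset (Fin n) => T.card = α ∧ ¬ memIdeal G T with hNαdef
  set Fα := Finset.univ.filter fun T : Finset (Fin n) => T.card = α ∧ ∃ S ∈ G, T ⊆ S with hFαdef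
  set Bα := Finset.univ.filter fun T : Finset (Fin n) => T.card = α ∧ memIdeal G T with hBαdef
  -- splitting: Nα.card + Bα.card = C(n, α)
  have hsplit : Nα.card + Bα.card = n.choose α := by
    have h1 : (Finset.univ.filter fun T : Finset (Fin n) => T.card = α).card = n.choose α := by
      rw [← Finset.powerset_univ, ← Finset.powersetCard_eq_filter, Finset.card_powersetCard]
      simp
    rw [← h1]
    rw [hNαdef, hBαdef]
    rw [← Finset.filter_filter (fun T : Finset (Fin n) => T.card = α) (fun T => ¬ memIdeal G T),
      ← Finset.filter_filter (fun T : Finset (Fin n) => T.card = α) (fun T => memIdeal G T)]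
    rw [add_comm]
    exact Finset.card_filter_add_card_filter_not _
  -- from the hypothesis: Bα.card + α < n
  have hgsmall : Bα.card + α < n := by
    have hN : faceN G α = Nα.card := hNcount α
    rw [hN] at h
    omega
  -- existence of an uncovered non-generator of cardinality α
  obtain ⟨U, hUcard, hUni, hUns⟩ :
      ∃ U : Finset (Fin n), U.card = α ∧ ¬ memIdeal G U ∧ ¬ ∃ S ∈ G, U ⊆ S := by
    by_contra hc
    push_neg at hc
    have hsub : Nα ⊆ Fα := by
      intro T hT
      rw [hNαdef, Finset.mem_filter] at hT
      rw [hFαdef, Finset.mem_filter]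
      exact ⟨Finset.mem_univ _, hT.2.1, hc T hT.2.1 hT.2.2⟩
    have hS₀F : S₀ ∈ Fα := by
      rw [hFαdef, Finset.mem_filter]
      exact ⟨Finset.mem_univ _, hS₀card, S₀, hS₀G, Finset.Subset.refl _⟩
    have hS₀N : S₀ ∉ Nα := by
      rw [hNαdef, Finset.mem_filter]
      rintro ⟨-, -, hni⟩
      exact hni ((hmemα S₀ hS₀card).mpr hS₀G)
    have hss : Nα ⊂ Fα := ⟨hsub, fun h2 => hS₀N (h2 hS₀F)⟩
    have hc2 := Finset.card_lt_card hss
    have := hf α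
    rw [hNcount α, hFcount α, ← hNαdef, ← hFαdef] at this
    omega
  -- at cardinality α + 1 the two face sets coincide
  set N1 := Finset.univ.filter fun T : Finset (Fin n) => T.card = α + 1 ∧ ¬ memIdeal G T with hN1def
  set F1 := Finset.univ.filter fun T : Finset (Fin n) =>
      T.card = α + 1 ∧ ∃ S ∈ G, T ⊆ S with hF1def
  have hsub1 : F1 ⊆ N1 := by
    intro T hT
    rw [hF1def, Finset.mem_filter] at hT
    obtain ⟨-, hTcard, W, hWG, hTW⟩ := hT
    rw [hN1def, Finset.mem_filter]
    refine ⟨Finset.mem_univ _, hTcard, ?_⟩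
    rintro ⟨S, hSG, hST⟩
    by_cases hSW : S = W
    · subst hSW
      have hTS : T = S := Finset.Subset.antisymm hTW hST
      exact hcon T (hTS ▸ hSG) hTcard
    · exact hG (Finset.mem_coe.mpr hSG) (Finset.mem_coe.mpr hWG) hSW (hST.trans hTW)
  have heq1 : F1 = N1 := by
    refine Finset.eq_of_subset_of_card_le hsub1 ?_
    have := hf (α + 1)
    rw [hNcount (α + 1), hFcount (α + 1), ← hN1def, ← hF1def] at this
    omega
  -- each extension of U by one point contains an α-generator through the new point
  have hkey : ∀ x : Fin n, ∃ S : Finset (Fin n),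
      x ∉ U → S ∈ Bα ∧ x ∈ S ∧ S ⊆ insert x U := by
    intro x
    by_cases hx : x ∉ U
    · have hTcard : (insert x U).card = α + 1 := by
        rw [Finset.card_insert_of_notMem hx, hUcard]
      have hTF : insert x U ∉ F1 := by
        rw [hF1def, Finset.mem_filter]
        rintro ⟨-, -, W, hWG, hTW⟩
        exact hUns ⟨W, hWG, (Finset.subset_insert x U).trans hTW⟩
      have hTmem : memIdeal G (insert x U) := by
        by_contra hni
        apply hTF
        rw [heq1, hN1def, Finset.mem_filter]
        exact ⟨Finset.mem_univ _, hTcard, hni⟩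
      obtain ⟨S, hSG, hST⟩ := hTmem
      have h1 : α ≤ S.card := hα_le S hSG
      have h2 : S.card ≤ α + 1 := hTcard ▸ Finset.card_le_card hST
      have h3 : S.card ≠ α + 1 := hcon S hSG
      have hScard : S.card = α := by omega
      have hxS : x ∈ S := by
        by_contra hxS
        have hSU : S ⊆ U := by
          intro y hy
          rcases Finset.mem_insert.mp (hST hy) with h | h
          · exact absurd (h ▸ hy) hxS
          · exact h
        have : S = U := Finset.eq_of_subset_of_card_le hSU (by omega)
        exact hUni ⟨S, hSG, this ▸ Finset.Subset.refl S⟩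
      refine ⟨S, fun _ => ⟨?_, hxS, hST⟩⟩
      rw [hBαdef, Finset.mem_filter]
      exact ⟨Finset.mem_univ _, hScard, S, hSG, Finset.Subset.refl S⟩
    · exact ⟨∅, fun h => absurd h hx⟩
  choose f hfx using hkey
  -- f is injective on Uᶜ and maps into Bα
  have hmaps : ∀ x ∈ Uᶜ, f x ∈ Bα := fun x hx => (hfx x (Finset.mem_compl.mp hx)).1
  have hinj : Set.InjOn f ↑(Uᶜ) := by
    intro x hx y hy hxy
    have hx' : x ∉ U := Finset.mem_compl.mp (Finset.mem_coe.mp hx)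
    have hy' : y ∉ U := Finset.mem_compl.mp (Finset.mem_coe.mp hy)
    obtain ⟨-, hxS, -⟩ := hfx x hx'
    obtain ⟨-, -, hSy⟩ := hfx y hy'
    have : x ∈ insert y U := hSy (hxy ▸ hxS)
    rcases Finset.mem_insert.mp this with h | h
    · exact h
    · exact absurd h hx'
  have hcard : (Uᶜ).card ≤ Bα.card := Finset.card_le_card_of_injOn f hmaps hinj
  have hcompl : (Uᶜ).card = n - α := by
    rw [Finset.card_compl, hUcard, Fintype.card_fin]
  have hαn : α ≤ n := by
    rw [← hUcard]
    simpa using Finset.card_le_card (Finset.subset_univ U)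
  omega
end

section
/- Let I be an f-ideal of k[x_1,…,x_n] with α(I) < ω(I), and let f = f(δ_F(I)) = f(δ_N(I)) be its common f-vector and ω = ω(I). If f_{ω−1} < ω, then I has a minimal generator of degree ω − 1. -/
/-!
Encoding: a squarefree monomial of `k[x₁,…,xₙ]` is encoded by its support, a
`Finset (Fin n)` (the monomial `∏ i ∈ T, xᵢ` corresponds to `T`); its degree is
`T.card`, and divisibility of squarefree monomials is inclusion of supports.
A squarefree monomial ideal `I` is encoded by the antichain
`G : Finset (Finset (Fin n))` of supports of its unique minimal set of monomial
generators `G(I)`; the squarefree monomial with support `T` lies in `I` iff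
`S ⊆ T` for some `S ∈ G`.
-/

open Finset

/-- Let `I` be an f-ideal with `α(I) < ω(I)`, common f-vector
`f = f(δ_F(I)) = f(δ_N(I))` and `ω = ω(I)`.  If `f_{ω-1} < ω` (f-vector entry of
dimension `ω - 1` = face count at cardinality `ω`), then `I` has a minimal
generator of degree `ω - 1`. -/
theorem exists_generator_of_degree_omega_pred {n : ℕ} (G : Finset (Finset (Fin n)))
    (hG : IsAntichain (· ⊆ ·) (G : Set (Finset (Fin n))))
    (hne : G.Nonempty) (hf : IsFIdeal G) (hlt : alphaI G < omegaI G)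
    (h : faceN G (omegaI G) < omegaI G) :
    ∃ S ∈ G, S.card = omegaI G - 1 := by
  classical
  set ω := omegaI G with hωdef
  have hbdd : BddAbove (Finset.card '' (G : Set (Finset (Fin n)))) :=
    (G.finite_toSet.image _).bddAbove
  have hle : ∀ S ∈ G, S.card ≤ ω := fun S hS => le_csSup hbdd ⟨S, hS, rfl⟩
  obtain ⟨S₀, hS₀G, hS₀card⟩ : ∃ S₀ ∈ (G : Set (Finset (Fin n))), S₀.card = ω := by
    have := Nat.sSup_mem ((Finset.coe_nonempty.2 hne).image Finset.card) hbdd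
    obtain ⟨S₀, hS₀, hc⟩ := this
    exact ⟨S₀, hS₀, hc⟩
  rw [Finset.mem_coe] at hS₀G
  by_contra hcon
  push_neg at hcon
  -- A : generators of top degree
  set A : Finset (Finset (Fin n)) := G.filter (fun S => S.card = ω) with hAdef
  -- faceF ω = A.card
  have hFω : faceF G ω = A.card := by
    rw [faceF_eq_filter]
    congr 1
    ext T
    simp only [mem_filter, mem_univ, true_and, hAdef]
    constructor
    · rintro ⟨hTc, S, hS, hTS⟩
      have hTeq : T = S := Finset.eq_of_subset_of_card_le hTS (by rw [hTc]; exact hle S hS)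
      exact ⟨hTeq ▸ hS, hTc⟩
    · rintro ⟨hTG, hTc⟩
      exact ⟨hTc, T, hTG, Finset.Subset.refl T⟩
  have hNω : faceN G ω = A.card := (hf ω).trans hFω
  -- find a non-face T₀ of size ω
  have hApos : 0 < A.card := by
    refine Finset.card_pos.2 ⟨S₀, ?_⟩
    simp [hAdef, hS₀G, hS₀card]
  obtain ⟨T₀, hT₀⟩ : (univ.filter (fun T : Finset (Fin n) =>
      T.card = ω ∧ ¬ memIdeal G T)).Nonempty := by
    rw [← Finset.card_pos, ← faceN_eq_filter, hNω]; exact hApos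
  simp only [mem_filter, mem_univ, true_and] at hT₀
  obtain ⟨hT₀c, hT₀ni⟩ := hT₀
  -- level ω - 1 : the F-faces and N-faces coincide
  set F : Finset (Finset (Fin n)) :=
    univ.filter (fun T : Finset (Fin n) => T.card = ω - 1 ∧ ∃ S ∈ G, T ⊆ S) with hFdef
  set N : Finset (Finset (Fin n)) :=
    univ.filter (fun T : Finset (Fin n) => T.card = ω - 1 ∧ ¬ memIdeal G T) with hNdef
  have hcards : N.card = F.card := by
    rw [hFdef, hNdef, ← faceN_eq_filter, ← faceF_eq_filter]; exact hf (ω - 1)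
  have hFN : F ⊆ N := by
    intro T hT
    simp only [hFdef, mem_filter, mem_univ, true_and] at hT
    obtain ⟨hTc, S, hSG, hTS⟩ := hT
    have hTneS : T ≠ S := by
      rintro rfl
      exact hcon T hSG hTc
    have hTltS : T.card < S.card :=
      Finset.card_lt_card (Finset.ssubset_iff_subset_ne.2 ⟨hTS, hTneS⟩)
    simp only [hNdef, mem_filter, mem_univ, true_and]
    refine ⟨hTc, ?_⟩
    rintro ⟨S', hS'G, hS'T⟩
    have hS'neS : S' ≠ S := by
      rintro rfl
      exact absurd (Finset.card_le_card hS'T) (by omega)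
    exact hG hS'G hSG hS'neS (hS'T.trans hTS)
  have hNF : N = F := (Finset.eq_of_subset_of_card_le hFN (le_of_eq hcards)).symm
  -- each (ω-1)-subset of T₀ lies in a distinct top generator
  have hexists : ∀ x ∈ T₀, ∃ S ∈ G, T₀.erase x ⊆ S := by
    intro x hx
    have hmemN : T₀.erase x ∈ N := by
      simp only [hNdef, mem_filter, mem_univ, true_and]
      refine ⟨by rw [Finset.card_erase_of_mem hx, hT₀c], ?_⟩
      rintro ⟨S', hS'G, hS'⟩
      exact hT₀ni ⟨S', hS'G, hS'.trans (Finset.erase_subset x T₀)⟩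
    rw [hNF] at hmemN
    simp only [hFdef, mem_filter, mem_univ, true_and] at hmemN
    exact hmemN.2
  set f : Fin n → Finset (Fin n) := fun x =>
    if hx : ∃ S ∈ G, T₀.erase x ⊆ S then hx.choose else ∅ with hfdef
  have hfspec : ∀ x ∈ T₀, f x ∈ G ∧ T₀.erase x ⊆ f x := by
    intro x hx
    have hex := hexists x hx
    simp only [hfdef, dif_pos hex]
    exact ⟨hex.choose_spec.1, hex.choose_spec.2⟩
  have hmaps : ∀ x ∈ T₀, f x ∈ A := by
    intro x hx
    obtain ⟨hfG, hfsub⟩ := hfspec x hx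
    have h1 : ω - 1 ≤ (f x).card := by
      have := Finset.card_le_card hfsub
      rwa [Finset.card_erase_of_mem hx, hT₀c] at this
    have h2 : (f x).card ≤ ω := hle _ hfG
    have h3 : (f x).card ≠ ω - 1 := hcon _ hfG
    have hω1 : 1 ≤ ω := le_trans (Nat.one_le_iff_ne_zero.2 ?_) (le_refl ω)
    · simp only [hAdef, mem_filter]
      exact ⟨hfG, by omega⟩
    · rintro hω0
      exact absurd hlt (by omega)
  have hinj : Set.InjOn f T₀ := by
    intro x hx y hy hxy
    by_contra hne'
    have hsub : T₀ ⊆ f x := by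
      intro z hz
      rcases eq_or_ne z x with rfl | hzx
      · have : z ∈ T₀.erase y := Finset.mem_erase.2 ⟨hne', hz⟩
        exact hxy ▸ (hfspec y hy).2 this
      · exact (hfspec x hx).2 (Finset.mem_erase.2 ⟨hzx, hz⟩)
    have hfxG := (hfspec x hx).1
    have heq : T₀ = f x :=
      Finset.eq_of_subset_of_card_le hsub (by rw [hT₀c]; exact hle _ hfxG)
    exact hT₀ni ⟨f x, hfxG, heq ▸ Finset.Subset.refl T₀⟩
  have hcard : T₀.card ≤ A.card := Finset.card_le_card_of_injOn f hmaps hinj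
  rw [hT₀c, ← hNω] at hcard
  omega
end

section
/- Let I be a square-free monomial ideal of k[x_1,…,x_n]. Then the Newton complementary dual Î equals the non-face (Stanley-Reisner) ideal of the Alexander dual of the facet complex of I, i.e., Î = N((δ_F(I))^∨); equivalently, δ_N(Î) = (δ_F(I))^∨. -/
/-!
Encoding: a squarefree monomial of `k[x₁,…,xₙ]` is encoded by its support, a
`Finset (Fin n)` (the monomial `∏ i ∈ T, xᵢ` corresponds to `T`); its degree is
`T.card`, and divisibility of squarefree monomials is inclusion of supports.
A squarefree monomial ideal `I` is encoded by the antichain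
`G : Finset (Finset (Fin n))` of supports of its unique minimal set of monomial
generators `G(I)`; the squarefree monomial with support `T` lies in `I` iff
`S ⊆ T` for some `S ∈ G`.
-/

open Finset

open MvPolynomial

/-- The squarefree monomial ideal of `k[x₁,…,xₙ]` whose monomial generators are
the squarefree monomials `∏ i ∈ S, xᵢ` for `S ∈ G`.  In particular
`monomialIdeal k (ncDual G)` is the Newton complementary dual
`Î = ⟨(x₁⋯xₙ)/m : m ∈ G(I)⟩`. -/
noncomputable def monomialIdeal (k : Type*) [Field k] {n : ℕ}
    (G : Finset (Finset (Fin n))) : Ideal (MvPolynomial (Fin n) k) :=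
  Ideal.span ((fun S : Finset (Fin n) => ∏ i ∈ S, (X i : MvPolynomial (Fin n) k)) ''
    (G : Set (Finset (Fin n))))

/-- The facet complex `δ_F(I)`: its faces are the subsets of the supports of the
minimal generators of `I`. -/
def facetComplex {n : ℕ} (G : Finset (Finset (Fin n))) : Set (Finset (Fin n)) :=
  {T | ∃ S ∈ G, T ⊆ S}

/-- The Alexander dual `Δ^∨ = {F ⊆ X : X \ F ∉ Δ}` of a simplicial complex `Δ`
on the vertex set `X = {x₁, …, xₙ}`. -/
def alexDual {n : ℕ} (Δ : Set (Finset (Fin n))) : Set (Finset (Fin n)) :=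
  {F | Fᶜ ∉ Δ}

/-- The non-face (Stanley–Reisner) ideal `N(Δ)` of a simplicial complex `Δ`:
the ideal generated by the squarefree monomials corresponding to non-faces. -/
noncomputable def nonfaceIdeal (k : Type*) [Field k] {n : ℕ}
    (Δ : Set (Finset (Fin n))) : Ideal (MvPolynomial (Fin n) k) :=
  Ideal.span ((fun T : Finset (Fin n) => ∏ i ∈ T, (X i : MvPolynomial (Fin n) k)) ''
    {T | T ∉ Δ})

/-- The non-face complex `δ_N(J)` of a squarefree monomial ideal `J`: its faces
are the supports of the squarefree monomials not in `J`. -/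
def nonfaceComplex (k : Type*) [Field k] {n : ℕ}
    (J : Ideal (MvPolynomial (Fin n) k)) : Set (Finset (Fin n)) :=
  {T | (∏ i ∈ T, (X i : MvPolynomial (Fin n) k)) ∉ J}

noncomputable def expon {n : ℕ} (T : Finset (Fin n)) : Fin n →₀ ℕ :=
  ∑ i ∈ T, Finsupp.single i 1

lemma expon_apply {n : ℕ} (T : Finset (Fin n)) (j : Fin n) :
    expon T j = if j ∈ T then 1 else 0 := by
  classical
  simp [expon, Finset.sum_apply', Finsupp.single_apply, Finset.sum_ite_eq' T j (fun _ => 1)]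

lemma expon_le_iff {n : ℕ} {S T : Finset (Fin n)} : expon S ≤ expon T ↔ S ⊆ T := by
  constructor
  · intro h j hj
    have := h j
    simp [expon_apply, hj] at this
    by_contra hjT
    simp [hjT] at this
  · intro h j
    simp only [expon_apply]
    split_ifs with h1 h2
    · rfl
    · exact absurd (h h1) h2
    · exact Nat.zero_le _
    · rfl

lemma prod_X_eq {k : Type*} [Field k] {n : ℕ} (T : Finset (Fin n)) :
    ∏ i ∈ T, (X i : MvPolynomial (Fin n) k) = monomial (expon T) 1 := by
  rw [expon, monomial_sum_one]
  rfl

lemma mem_monomialIdeal_iff {k : Type*} [Field k] {n : ℕ} (H : Finset (Finset (Fin n)))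
    (T : Finset (Fin n)) :
    (∏ i ∈ T, (X i : MvPolynomial (Fin n) k)) ∈
      Ideal.span ((fun S : Finset (Fin n) => ∏ i ∈ S, (X i : MvPolynomial (Fin n) k)) ''
        (H : Set (Finset (Fin n)))) ↔ ∃ S ∈ H, S ⊆ T := by
  classical
  have : ((fun S : Finset (Fin n) => ∏ i ∈ S, (X i : MvPolynomial (Fin n) k)) ''
        (H : Set (Finset (Fin n)))) = (fun s => monomial s (1 : k)) '' (expon '' H) := by
    rw [Set.image_image]; exact Set.image_congr fun S _ => prod_X_eq S
  rw [this, prod_X_eq, mem_ideal_span_monomial_image]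
  rw [support_monomial, if_neg (one_ne_zero (α := k))]
  simp only [Finset.mem_singleton, forall_eq, Set.mem_image, Finset.mem_coe]
  constructor
  · rintro ⟨si, ⟨S, hS, rfl⟩, hle⟩
    exact ⟨S, hS, expon_le_iff.mp hle⟩
  · rintro ⟨S, hS, hsub⟩
    exact ⟨expon S, ⟨S, hS, rfl⟩, expon_le_iff.mpr hsub⟩

/-- The Newton complementary dual `Î` of a squarefree monomial ideal `I` equals
the non-face (Stanley–Reisner) ideal of the Alexander dual of the facet complex
of `I`, i.e. `Î = N((δ_F(I))^∨)`; equivalently, `δ_N(Î) = (δ_F(I))^∨`. -/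
theorem ncDual_eq_nonfaceIdeal_alexDual_facetComplex (k : Type*) [Field k] {n : ℕ}
    (G : Finset (Finset (Fin n)))
    (hG : IsAntichain (· ⊆ ·) (G : Set (Finset (Fin n)))) :
    monomialIdeal k (ncDual G) = nonfaceIdeal k (alexDual (facetComplex G)) ∧
      nonfaceComplex k (monomialIdeal k (ncDual G)) = alexDual (facetComplex G) := by
  classical
  constructor
  · apply le_antisymm
    · rw [monomialIdeal, Ideal.span_le]
      rintro _ ⟨S', hS', rfl⟩
      rw [Finset.mem_coe, ncDual, Finset.mem_image] at hS'
      obtain ⟨S, hS, rfl⟩ := hS'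
      apply Ideal.subset_span
      refine ⟨Sᶜ, ?_, rfl⟩
      simp only [Set.mem_setOf_eq, alexDual, facetComplex, compl_compl, not_not,
        Set.mem_setOf_eq]
      exact ⟨S, hS, subset_rfl⟩
    · rw [nonfaceIdeal, Ideal.span_le]
      rintro _ ⟨T, hT, rfl⟩
      simp only [Set.mem_setOf_eq, alexDual, facetComplex, not_not] at hT
      obtain ⟨S, hS, hsub⟩ := hT
      rw [SetLike.mem_coe, monomialIdeal, mem_monomialIdeal_iff]
      exact ⟨Sᶜ, Finset.mem_image_of_mem _ hS, compl_le_iff_compl_le.mpr hsub⟩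
  · ext T
    simp only [nonfaceComplex, Set.mem_setOf_eq, monomialIdeal, mem_monomialIdeal_iff,
      alexDual, facetComplex, ncDual, Finset.mem_image]
    constructor
    · intro h hmem
      obtain ⟨S, hS, hsub⟩ := hmem
      exact h ⟨Sᶜ, ⟨S, hS, rfl⟩, compl_le_iff_compl_le.mpr hsub⟩
    · rintro h ⟨S', ⟨S, hS, rfl⟩, hsub⟩
      exact h ⟨S, hS, compl_le_iff_compl_le.mp hsub⟩
end
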